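/- Let A = k[[t^a, t^{a+1}]] with a ≥ 2, q = a−1, s = aℓ with 1 ≤ ℓ < q (i.e., the case r = 0). Then I = (t^s) : 𝔪^{a−1} equals 𝔪^ℓ, and the associated graded ring G(I) is Cohen–Macaulay. -/

import Mathlib

set_option maxHeartbeats 1000000
set_option synthInstance.maxHeartbeats 1000000

open PowerSeries

/-- The numerical semigroup ring `k[[H]]`: power series supported on `H`. -/
noncomputable def ssr (k : Type) [Field k] (H : AddSubmonoid ℕ) :
    Subalgebra k (PowerSeries k) where
  carrier := {f | ∀ n : ℕ, n ∉ H → PowerSeries.coeff (R := k) n f = 0}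
  mul_mem' := by
    intro f g hf hg n hn
    rw [Set.mem_setOf_eq] at hf hg
    rw [PowerSeries.coeff_mul]
    apply Finset.sum_eq_zero
    rintro ⟨i, j⟩ hij
    replace hij : i + j = n := by simpa using hij
    by_cases hi : i ∈ H
    · have hj : j ∉ H := fun hj => hn (hij ▸ H.add_mem hi hj)
      rw [hg j hj, mul_zero]
    · rw [hf i hi, zero_mul]
  add_mem' := by
    intro f g hf hg n hn
    rw [Set.mem_setOf_eq] at hf hg
    rw [map_add, hf n hn, hg n hn, add_zero]
  one_mem' := by
    intro n hn
    have h0 : n ≠ 0 := fun h => hn (by rw [h]; exact H.zero_mem)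
    simp [PowerSeries.coeff_one, h0]
  zero_mem' := by
    intro n _
    simp
  algebraMap_mem' := by
    intro r n hn
    have h0 : n ≠ 0 := fun h => hn (by rw [h]; exact H.zero_mem)
    simp [PowerSeries.algebraMap_apply, PowerSeries.coeff_C, h0]

/-- The monomial `t^n` as an element of `k[[H]]`, for `n ∈ H`. -/
noncomputable def tp (k : Type) [Field k] (H : AddSubmonoid ℕ) (n : ℕ) (hn : n ∈ H) :
    ssr k H :=
  ⟨PowerSeries.X ^ n, by
    intro m hm
    rw [PowerSeries.coeff_X_pow]
    exact if_neg (fun h => hm (by rw [h]; exact hn))⟩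

/-- The maximal ideal of `k[[H]]`, generated by the monomials `t^n`, `0 < n ∈ H`. -/
noncomputable def mIdeal (k : Type) [Field k] (H : AddSubmonoid ℕ) : Ideal (ssr k H) :=
  Ideal.span {x | ∃ n : ℕ, ∃ hn : n ∈ H, 0 < n ∧ x = tp k H n hn}

/-! Let `J_c ⊆ k[[H]]` be the ideal of elements of order `≥ c`. For `H = ⟨a, a+1⟩` one has
`𝔪^e = J_{ae}`, since an element of order `≥ a(e+1)` splits as `t^a g + t^(a+1) h` with `g, h` of
order `≥ ae`. As every integer `≥ a(a-1)` lies in `H`, `J_{s + a(a-1)} ⊆ (t^s)`, which gives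
`𝔪^ℓ ⊆ (t^s) : 𝔪^(a-1)`. Conversely, a term `t^(aq+r)` with `r ≤ q < ℓ` of an element of the
colon ideal is moved onto a gap of `H` by a suitable monomial of `𝔪^(a-1)`, so
`(t^s) : 𝔪^(a-1) = J_s = 𝔪^ℓ`. Finally `(t^s) ∩ J_{s+c} = t^s J_c` by cancelling `t^s` in `k[[t]]`,
which is `Q ∩ I^(n+1) = Q I^n`. -/

section ConsecutiveSemigroup

variable {a : ℕ}

lemma mem_closure_pair_succ_iff {n : ℕ} :
    n ∈ AddSubmonoid.closure ({a, a + 1} : Set ℕ) ↔ ∃ q r, r ≤ q ∧ a * q + r = n := by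
  rw [AddSubmonoid.mem_closure_pair]
  constructor
  · rintro ⟨x, y, rfl⟩
    exact ⟨x + y, y, by omega, by simp only [smul_eq_mul]; ring⟩
  · rintro ⟨q, r, hrq, rfl⟩
    obtain ⟨d, rfl⟩ := Nat.exists_eq_add_of_le hrq
    exact ⟨d, r, by simp only [smul_eq_mul]; ring⟩

lemma mem_closure_pair_succ_of_le (ha : 0 < a) {m : ℕ} (hm : a * (a - 1) ≤ m) :
    m ∈ AddSubmonoid.closure ({a, a + 1} : Set ℕ) := by
  have hq : a - 1 ≤ m / a := (Nat.le_div_iff_mul_le ha).2 (by rwa [mul_comm])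
  have hr := Nat.mod_lt m ha
  exact mem_closure_pair_succ_iff.2 ⟨m / a, m % a, by omega, Nat.div_add_mod m a⟩

lemma mul_add_pred_notMem_closure_pair_succ {q : ℕ} (hq : q < a - 1) :
    a * q + (a - 1) ∉ AddSubmonoid.closure ({a, a + 1} : Set ℕ) := by
  rw [mem_closure_pair_succ_iff]
  rintro ⟨q', r, hr, h⟩
  rcases le_or_gt q' q with hle | hlt
  · have := Nat.mul_le_mul_left a hle
    omega
  · have := Nat.mul_le_mul_left a hlt
    rw [Nat.mul_succ] at this
    omega

lemma mem_closure_pair_succ_of_add_succ_mem {n : ℕ}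
    (h : n + a + 1 ∈ AddSubmonoid.closure ({a, a + 1} : Set ℕ))
    (h' : n + 1 ∉ AddSubmonoid.closure ({a, a + 1} : Set ℕ)) :
    n ∈ AddSubmonoid.closure ({a, a + 1} : Set ℕ) := by
  rw [mem_closure_pair_succ_iff] at h h' ⊢
  obtain ⟨_ | q, _ | r, hr, h⟩ := h
  · omega
  · omega
  · exact absurd ⟨q, 0, q.zero_le, by rw [Nat.mul_succ] at h; omega⟩ h'
  · exact ⟨q, r, by omega, by rw [Nat.mul_succ] at h; omega⟩

end ConsecutiveSemigroup

section OrderIdeal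

variable {k : Type} [Field k] {H : AddSubmonoid ℕ}

lemma coe_tp {n : ℕ} (hn : n ∈ H) : ((tp k H n hn : ssr k H) : k⟦X⟧) = X ^ n := rfl

variable (k H) in
noncomputable def orderIdeal (c : ℕ) : Ideal (ssr k H) :=
  (Ideal.span {(X : k⟦X⟧) ^ c}).comap (ssr k H).val

lemma mem_orderIdeal {c : ℕ} {f : ssr k H} : f ∈ orderIdeal k H c ↔ X ^ c ∣ (f : k⟦X⟧) := by
  rw [orderIdeal, Ideal.mem_comap, Ideal.mem_span_singleton]
  rfl

lemma tp_mem_orderIdeal {n c : ℕ} (hn : n ∈ H) (hc : c ≤ n) : tp k H n hn ∈ orderIdeal k H c :=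
  mem_orderIdeal.2 (pow_dvd_pow X hc)

lemma orderIdeal_mul_le (b c : ℕ) :
    orderIdeal k H b * orderIdeal k H c ≤ orderIdeal k H (b + c) := by
  refine (Ideal.le_comap_mul _).trans (Ideal.comap_mono ?_)
  rw [Ideal.span_singleton_mul_span_singleton, pow_add]

lemma orderIdeal_pow_le (c e : ℕ) : orderIdeal k H c ^ e ≤ orderIdeal k H (c * e) := by
  induction e with
  | zero => simp [orderIdeal]
  | succ e ih =>
    rw [pow_succ, Nat.mul_succ]
    exact (Ideal.mul_mono_left ih).trans (orderIdeal_mul_le _ _)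

lemma span_tp_inf_orderIdeal {s : ℕ} (hs : s ∈ H) (c : ℕ) :
    Ideal.span {tp k H s hs} ⊓ orderIdeal k H (s + c) =
      Ideal.span {tp k H s hs} * orderIdeal k H c := by
  refine le_antisymm ?_ (le_inf Ideal.mul_le_left ?_)
  · intro f hf
    obtain ⟨hfQ, hfJ⟩ := Submodule.mem_inf.1 hf
    obtain ⟨g, rfl⟩ := Ideal.mem_span_singleton'.1 hfQ
    refine mul_comm g _ ▸ Ideal.mul_mem_mul (Ideal.mem_span_singleton_self _) (mem_orderIdeal.2 ?_)
    rw [mem_orderIdeal, mul_comm, MulMemClass.coe_mul, coe_tp, pow_add] at hfJ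
    exact (mul_dvd_mul_iff_left (pow_ne_zero s X_ne_zero)).1 hfJ
  · refine (Ideal.mul_mono_left ?_).trans (orderIdeal_mul_le s c)
    exact (Ideal.span_singleton_le_iff_mem _).2 (tp_mem_orderIdeal hs le_rfl)

lemma orderIdeal_add_le_span_tp {c s : ℕ} (hc : ∀ m, c ≤ m → m ∈ H) (hs : s ∈ H) :
    orderIdeal k H (s + c) ≤ Ideal.span {tp k H s hs} := by
  intro f hf
  obtain ⟨g, hg⟩ := dvd_trans (pow_dvd_pow X (Nat.le_add_right s c)) (mem_orderIdeal.1 hf)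
  have hgH : g ∈ ssr k H := by
    intro m hm
    have hcoeff := congrArg (coeff (m + s)) hg
    rw [mul_comm, coeff_mul_X_pow] at hcoeff
    rw [← hcoeff]
    exact X_pow_dvd_iff.1 (mem_orderIdeal.1 hf) _ (by have := mt (hc m) hm; omega)
  exact Ideal.mem_span_singleton'.2 ⟨⟨g, hgH⟩, Subtype.ext (by rw [hg, mul_comm]; rfl)⟩

lemma coeff_eq_zero_of_mul_tp_mem_span {f : ssr k H} {m n s : ℕ} (hm : m ∈ H) (hs : s ∈ H)
    (h : f * tp k H m hm ∈ Ideal.span {tp k H s hs}) (hsn : s ≤ n + m) (hgap : n + m - s ∉ H) :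
    coeff n (f : k⟦X⟧) = 0 := by
  obtain ⟨g, hg⟩ := Ideal.mem_span_singleton'.1 h
  have hcoeff := congrArg (fun x : ssr k H ↦ coeff (n + m) (x : k⟦X⟧)) hg
  simp only [MulMemClass.coe_mul, coe_tp, coeff_mul_X_pow] at hcoeff
  rw [← hcoeff, mul_comm, coeff_X_pow_mul', if_pos hsn]
  exact g.2 _ hgap

end OrderIdeal

section ConsecutiveSemigroupRing

variable {k : Type} [Field k] {a : ℕ} {H : AddSubmonoid ℕ}

lemma span_tp_pair_le_orderIdeal (haH : a ∈ H) (ha1H : a + 1 ∈ H) :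
    Ideal.span {tp k H a haH, tp k H (a + 1) ha1H} ≤ orderIdeal k H a := by
  rw [Ideal.span_le, Set.insert_subset_iff, Set.singleton_subset_iff]
  exact ⟨tp_mem_orderIdeal haH le_rfl, tp_mem_orderIdeal ha1H (Nat.le_succ a)⟩

/-- Write `f = t^a g + t^(a+1) h`: the coefficient of `t^N` goes to `g` when `N - a ∈ H`, and
otherwise to `h`, as then `N - a - 1 ∈ H`. -/
lemma orderIdeal_mul_succ_le (hH : H = AddSubmonoid.closure {a, a + 1}) (haH : a ∈ H)
    (ha1H : a + 1 ∈ H) (e : ℕ) :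
    orderIdeal k H (a * (e + 1)) ≤
      Ideal.span {tp k H a haH, tp k H (a + 1) ha1H} * orderIdeal k H (a * e) := by
  classical
  intro f hf
  rw [mem_orderIdeal, X_pow_dvd_iff, Nat.mul_succ] at hf
  set g : k⟦X⟧ := mk fun m ↦ if m ∈ H then coeff (m + a) (f : k⟦X⟧) else 0
  set h : k⟦X⟧ := mk fun m ↦ if m + 1 ∈ H then 0 else coeff (m + a + 1) (f : k⟦X⟧)
  have hg : g ∈ ssr k H := fun m hm ↦ by simp [g, hm]
  have hh : h ∈ ssr k H := by
    intro m hm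
    simp only [h, coeff_mk]
    split_ifs with hm1
    · rfl
    · subst hH
      exact f.2 _ fun hmem ↦ hm (mem_closure_pair_succ_of_add_succ_mem hmem hm1)
  have hgJ : (⟨g, hg⟩ : ssr k H) ∈ orderIdeal k H (a * e) := by
    rw [mem_orderIdeal, X_pow_dvd_iff]
    intro m hm
    simp only [g, coeff_mk]
    split_ifs
    · exact hf _ (by omega)
    · rfl
  have hhJ : (⟨h, hh⟩ : ssr k H) ∈ orderIdeal k H (a * e) := by
    rw [mem_orderIdeal, X_pow_dvd_iff]
    intro m hm
    simp only [h, coeff_mk]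
    split_ifs with hm1
    · rfl
    · have hae : m + 1 ≠ a * e := fun hm' ↦ hm1 (hm' ▸ by simpa [mul_comm] using H.nsmul_mem haH e)
      exact hf _ (by omega)
  have hdecomp : f = tp k H a haH * ⟨g, hg⟩ + tp k H (a + 1) ha1H * ⟨h, hh⟩ := by
    ext1
    ext N
    simp only [AddMemClass.coe_add, MulMemClass.coe_mul, coe_tp, map_add, coeff_X_pow_mul', g, h,
      coeff_mk]
    rcases lt_or_ge N a with hN | hN
    · rw [if_neg (by omega), if_neg (by omega), hf N (by omega), add_zero]
    rcases eq_or_lt_of_le hN with rfl | hN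
    · simp [H.zero_mem]
    have hN1 : N - (a + 1) + 1 = N - a := by omega
    rw [if_pos (show a + 1 ≤ N from hN), hN1, Nat.sub_add_cancel hN.le,
      show N - (a + 1) + a + 1 = N by omega]
    split_ifs <;> simp
  rw [hdecomp]
  exact Ideal.add_mem _ (Ideal.mul_mem_mul (Ideal.subset_span (by simp)) hgJ)
    (Ideal.mul_mem_mul (Ideal.subset_span (by simp)) hhJ)

lemma span_tp_pair_pow_eq_orderIdeal (hH : H = AddSubmonoid.closure {a, a + 1}) (haH : a ∈ H)
    (ha1H : a + 1 ∈ H) (e : ℕ) :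
    Ideal.span {tp k H a haH, tp k H (a + 1) ha1H} ^ e = orderIdeal k H (a * e) := by
  refine le_antisymm ((Ideal.pow_right_mono (span_tp_pair_le_orderIdeal haH ha1H) e).trans
    (orderIdeal_pow_le a e)) ?_
  induction e with
  | zero => simp
  | succ e ih =>
    rw [pow_succ']
    exact (orderIdeal_mul_succ_le hH haH ha1H e).trans (Ideal.mul_mono_right ih)

/-- For `t^(aq+r)`, `r ≤ q < ℓ`, the multiplier `t^(a(a-1) + (a-1-r)) ∈ 𝔪^(a-1)` moves the exponent
to `a(q + a-1-ℓ) + (a-1)`, a gap of `H`. -/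
lemma colon_le_orderIdeal (hH : H = AddSubmonoid.closure {a, a + 1}) (haH : a ∈ H)
    (ha1H : a + 1 ∈ H) {ℓ : ℕ} (hℓ : ℓ ≤ a - 1) (hs : a * ℓ ∈ H) :
    (Ideal.span {tp k H (a * ℓ) hs}).colon
        ((Ideal.span {tp k H a haH, tp k H (a + 1) ha1H} ^ (a - 1) : Ideal (ssr k H)) :
          Set (ssr k H)) ≤ orderIdeal k H (a * ℓ) := by
  intro f hf
  rw [mem_orderIdeal, X_pow_dvd_iff]
  intro n hn
  refine (em (n ∈ H)).elim (fun hnH ↦ ?_) (f.2 n)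
  obtain ⟨q, r, hrq, rfl⟩ := mem_closure_pair_succ_iff.1 (hH ▸ hnH)
  have hqℓ : q < ℓ := by
    by_contra! hℓq
    have := Nat.mul_le_mul_left a hℓq
    omega
  have hm : a * (a - 1) + (a - 1 - r) ∈ H := hH ▸ mem_closure_pair_succ_iff.2 ⟨_, _, by omega, rfl⟩
  have htp : tp k H _ hm ∈ Ideal.span {tp k H a haH, tp k H (a + 1) ha1H} ^ (a - 1) := by
    rw [span_tp_pair_pow_eq_orderIdeal hH haH ha1H]
    exact tp_mem_orderIdeal hm (Nat.le_add_right _ _)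
  have hgap := hH ▸ mul_add_pred_notMem_closure_pair_succ (a := a) (q := q + (a - 1 - ℓ)) (by omega)
  have hsplit : a * (a - 1) = a * ℓ + a * (a - 1 - ℓ) := by
    rw [← mul_add, Nat.add_sub_cancel' hℓ]
  refine coeff_eq_zero_of_mul_tp_mem_span hm hs (Submodule.mem_colon.1 hf _ htp) (by omega) ?_
  rwa [show a * q + r + (a * (a - 1) + (a - 1 - r)) - a * ℓ = a * (q + (a - 1 - ℓ)) + (a - 1) by
    rw [mul_add]; omega]

end ConsecutiveSemigroupRing

theorem stmt15_general (k : Type) [Field k] (a : ℕ)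
    (H : AddSubmonoid ℕ) (hH : H = AddSubmonoid.closure {a, a + 1})
    (haH : a ∈ H) (ha1H : a + 1 ∈ H)
    (ℓ : ℕ) (hℓ : ℓ < a - 1)
    (s : ℕ) (hsval : s = a * ℓ) (hs : s ∈ H)
    (𝔪 : Ideal (ssr k H)) (h𝔪 : 𝔪 = Ideal.span {tp k H a haH, tp k H (a + 1) ha1H})
    (Q : Ideal (ssr k H)) (hQ : Q = Ideal.span {tp k H s hs})
    (I : Ideal (ssr k H)) (hI : I = Submodule.colon Q ((𝔪 ^ (a - 1) : Ideal (ssr k H)) : Set (ssr k H))) :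
    I = 𝔪 ^ ℓ ∧ ∀ n : ℕ, Q ⊓ I ^ (n + 1) = Q * I ^ n := by
  subst hsval hQ
  have hpow : ∀ e, 𝔪 ^ e = orderIdeal k H (a * e) := by
    rw [h𝔪]
    exact span_tp_pair_pow_eq_orderIdeal hH haH ha1H
  have hconductor : ∀ m, a * (a - 1) ≤ m → m ∈ H :=
    fun m hm ↦ hH ▸ mem_closure_pair_succ_of_le (by omega) hm
  have hIeq : I = 𝔪 ^ ℓ := by
    have hcolon : I ≤ orderIdeal k H (a * ℓ) := by
      rw [hI, h𝔪]
      exact colon_le_orderIdeal hH haH ha1H hℓ.le hs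
    refine le_antisymm (hpow ℓ ▸ hcolon) ?_
    refine fun f hf ↦ hI ▸ Submodule.mem_colon.2 fun p hp ↦ ?_
    rw [hpow] at hf
    rw [SetLike.mem_coe, hpow] at hp
    exact orderIdeal_add_le_span_tp hconductor hs (orderIdeal_mul_le _ _ (Ideal.mul_mem_mul hf hp))
  refine ⟨hIeq, fun n ↦ ?_⟩
  rw [hIeq, ← pow_mul, ← pow_mul, hpow, hpow, show a * (ℓ * (n + 1)) = a * ℓ + a * (ℓ * n) by ring,
    span_tp_inf_orderIdeal]

/-- Corollary 3.6 (1): for `q = a-1` and `s = aℓ` (`1 ≤ ℓ < a-1`), `I = 𝔪^ℓ` and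
`G(I)` is Cohen-Macaulay, i.e. `Q ∩ I^{n+1} = QI^n` for all `n`. -/
theorem stmt15 (k : Type) [Field k] (a : ℕ) (ha : 2 ≤ a)
    (H : AddSubmonoid ℕ) (hH : H = AddSubmonoid.closure {a, a + 1})
    (haH : a ∈ H) (ha1H : a + 1 ∈ H)
    (ℓ : ℕ) (hℓ1 : 1 ≤ ℓ) (hℓ : ℓ < a - 1)
    (s : ℕ) (hsval : s = a * ℓ) (hs : s ∈ H)
    (𝔪 : Ideal (ssr k H)) (h𝔪 : 𝔪 = Ideal.span {tp k H a haH, tp k H (a + 1) ha1H})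
    (Q : Ideal (ssr k H)) (hQ : Q = Ideal.span {tp k H s hs})
    (I : Ideal (ssr k H)) (hI : I = Submodule.colon Q ((𝔪 ^ (a - 1) : Ideal (ssr k H)) : Set (ssr k H))) :
    I = 𝔪 ^ ℓ ∧ ∀ n : ℕ, Q ⊓ I ^ (n + 1) = Q * I ^ n :=
  stmt15_general k a H hH haH ha1H ℓ hℓ s hsval hs 𝔪 h𝔪 Q hQ I hI
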